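/- Let Y_1,...,Y_n be i.i.d. with P(Y = j) = p_j for 0 ≤ j ≤ b-1. Then the probability that the descent set of (Y_1,...,Y_n) is contained in S = {s_1 < ... < s_k} equals h_{s_1}·h_{s_2-s_1}···h_{n-s_k}, where h_m = h_m(p_0,...,p_{b-1}) is the complete homogeneous symmetric polynomial of degree m evaluated at (p_0,...,p_{b-1}); consequently the probability that the descent set equals S is det(h_{s_{j+1}-s_i})_{i,j=0}^k with s_0=0, s_{k+1}=n and h_m=0 for m<0. Moreover the probability of i consecutive descents, P(Y_1 > Y_2 > ... > Y_{i+1}), equals e_{i+1}(p_0,...,p_{b-1}), the elementary symmetric polynomial. -/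

import Mathlib

/-!
Cutting a word of length `t + u` after its first `t` letters makes the weight `∏ p (y i)`
multiplicative, and away from position `t` the descents of the concatenation are those of the
two pieces. Hence `Des ⊆ {s₁, …, s_k}` splits into the independent events "block `i` is weakly
increasing", of probabilities `h_{s_{i+1} - s_i}`. A word has `Des = S` or `Des = S \ {s₁}` iff its
first block is weakly increasing and its tail has descent set `S' = {s₂ - s₁, …, s_k - s₁}`; with
`β(S) = P(Des = S)` this gives `β(S) + β(S \ {s₁}) = h_{s₁} β(S')`, which is the expansion of
`det (h_{s_{j+1} - s_i})` along its first column, whose only nonzero entries are `h_{s₁}` and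
`h₀ = 1`. Finally, strictly decreasing words of length `r` are the `r`-subsets of the alphabet,
which gives `e_r`.
-/

/-- The complete homogeneous symmetric polynomial `h_m(p_0, …, p_{b-1})`, as a sum over
weakly increasing index sequences. -/
noncomputable def hpoly (b : ℕ) (p : Fin b → ℝ) (m : ℕ) : ℝ :=
  ∑ f ∈ Finset.univ.filter (fun f : Fin m → Fin b => ∀ i j : Fin m, i ≤ j → f i ≤ f j),
    ∏ i, p (f i)

/-- The elementary symmetric polynomial `e_r(p_0, …, p_{b-1})`. -/
noncomputable def epoly (b : ℕ) (p : Fin b → ℝ) (r : ℕ) : ℝ :=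
  ∑ T ∈ Finset.powersetCard r (Finset.univ : Finset (Fin b)), ∏ i ∈ T, p i

open Finset

section Fin

variable {α : Type*}

theorem Fin.append_mk_of_lt {t u i : ℕ} (a : Fin t → α) (c : Fin u → α) (hi : i < t + u)
    (h : i < t) : Fin.append a c ⟨i, hi⟩ = a ⟨i, h⟩ :=
  Fin.append_left a c ⟨i, h⟩

theorem Fin.append_mk_of_le {t u i : ℕ} (a : Fin t → α) (c : Fin u → α) (hi : i < t + u)
    (h : t ≤ i) : Fin.append a c ⟨i, hi⟩ = c ⟨i - t, by omega⟩ := by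
  simpa [Fin.natAdd, Nat.add_sub_cancel' h] using Fin.append_right a c ⟨i - t, by omega⟩

theorem Fin.val_succAbove_one {k : ℕ} (i : Fin (k + 1)) :
    ((1 : Fin (k + 2)).succAbove i).val = if i.val = 0 then 0 else i.val + 1 := by
  rcases Fin.eq_zero_or_eq_succ i with rfl | ⟨j, rfl⟩
  · simp
  · simp [Fin.succAbove, Fin.lt_def]

end Fin

theorem Finset.erase_eq_iff_of_notMem {β : Type*} [DecidableEq β] {s t : Finset β} {x : β}
    (hx : x ∉ t) : s.erase x = t ↔ s = insert x t ∨ s = t := by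
  by_cases hs : x ∈ s
  · rw [erase_eq_iff_eq_insert hs hx, or_iff_left]
    rintro rfl
    exact hx hs
  · rw [erase_eq_of_notMem hs, or_iff_right]
    rintro rfl
    exact hs (mem_insert_self x t)

section Descents

variable {α : Type*} [LinearOrder α] {n : ℕ}

/-- Positions are `1`-based as in the paper: `j ∈ descents y` when the `j`-th letter exceeds the
`(j + 1)`-st, i.e. `y (j - 1) > y j` in the `0`-based indexing of `Fin n`. -/
def descents (y : Fin n → α) : Finset ℕ :=
  (univ.filter fun i : Fin (n - 1) =>
    y ⟨i + 1, by have := i.isLt; omega⟩ < y ⟨i, by have := i.isLt; omega⟩).image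
    (fun i => i.val + 1)

theorem mem_descents {y : Fin n → α} {j : ℕ} :
    j ∈ descents y ↔ ∃ i : ℕ, ∃ h : i + 1 < n, y ⟨i + 1, h⟩ < y ⟨i, by omega⟩ ∧ i + 1 = j := by
  simp only [descents, mem_image, mem_filter, mem_univ, true_and]
  constructor
  · rintro ⟨i, hi, rfl⟩
    exact ⟨i, by omega, hi, rfl⟩
  · rintro ⟨i, h, hi, rfl⟩
    exact ⟨⟨i, by omega⟩, hi, rfl⟩

theorem descents_subset_iff {y : Fin n → α} {S : Finset ℕ} :
    descents y ⊆ S ↔ ∀ i : Fin (n - 1),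
      y ⟨i + 1, by have := i.isLt; omega⟩ < y ⟨i, by have := i.isLt; omega⟩ → i.val + 1 ∈ S := by
  simp [descents, image_subset_iff]

theorem descents_subset_Ioo (y : Fin n → α) : descents y ⊆ Ioo 0 n := by
  intro j hj
  obtain ⟨i, h, -, rfl⟩ := mem_descents.1 hj
  simp only [mem_Ioo]
  omega

theorem descents_eq_iff {y : Fin n → α} {S : Finset ℕ} (hS : S ⊆ Ioo 0 n) :
    descents y = S ↔ ∀ i : Fin (n - 1),
      (y ⟨i + 1, by have := i.isLt; omega⟩ < y ⟨i, by have := i.isLt; omega⟩ ↔ i.val + 1 ∈ S) := by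
  constructor
  · rintro rfl i
    exact ⟨fun h => mem_descents.2 ⟨i, _, h, rfl⟩, fun h => by
      obtain ⟨i', _, hi', hii'⟩ := mem_descents.1 h
      obtain rfl : i' = i := by omega
      exact hi'⟩
  · intro H
    ext j
    constructor
    · intro hj
      obtain ⟨i, h, hi, rfl⟩ := mem_descents.1 hj
      exact (H ⟨i, by omega⟩).1 hi
    · intro hj
      have := mem_Ioo.1 (hS hj)
      obtain ⟨i, rfl⟩ : ∃ i, j = i + 1 := ⟨j - 1, by omega⟩
      exact mem_descents.2 ⟨i, by omega, (H ⟨i, by omega⟩).2 hj, rfl⟩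

theorem descents_eq_empty_iff {y : Fin n → α} : descents y = ∅ ↔ Monotone y := by
  rcases n with _ | m
  · simp [descents, Subsingleton.monotone]
  · rw [Fin.monotone_iff_le_succ, ← subset_empty, descents_subset_iff]
    simp only [notMem_empty, imp_false, not_lt]
    rfl

theorem descents_subset_map_addRight_iff {t : ℕ} (a : Fin t → α) (T : Finset ℕ) :
    descents a ⊆ T.map (addRightEmbedding t) ↔ descents a = ∅ := by
  refine ⟨fun h => eq_empty_of_forall_notMem fun j hj => ?_, fun h => h ▸ empty_subset _⟩
  have := mem_Ioo.1 (descents_subset_Ioo a hj)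
  obtain ⟨x, -, rfl⟩ := mem_map.1 (h hj)
  simp at this

theorem erase_descents_append {t u : ℕ} (a : Fin t → α) (c : Fin u → α) :
    (descents (Fin.append a c)).erase t = descents a ∪ (descents c).map (addRightEmbedding t) := by
  ext j
  simp only [mem_erase, mem_union, mem_map, mem_descents, addRightEmbedding_apply]
  constructor
  · rintro ⟨hjt, i, hi, hdes, rfl⟩
    rcases lt_or_ge (i + 1) t with hit | hit
    · rw [Fin.append_mk_of_lt _ _ _ hit, Fin.append_mk_of_lt _ _ _ (by omega)] at hdes
      exact Or.inl ⟨i, hit, hdes, rfl⟩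
    · rw [Fin.append_mk_of_le _ _ _ hit, Fin.append_mk_of_le _ _ _ (by omega)] at hdes
      refine Or.inr ⟨i - t + 1, ⟨i - t, by omega, ?_, rfl⟩, by omega⟩
      convert hdes using 3
      omega
  · rintro (⟨i, hi, hdes, rfl⟩ | ⟨_, ⟨i, hi, hdes, rfl⟩, rfl⟩)
    · refine ⟨by omega, i, by omega, ?_, rfl⟩
      rwa [Fin.append_mk_of_lt _ _ _ hi, Fin.append_mk_of_lt _ _ _ (by omega)]
    · refine ⟨by omega, i + t, by omega, ?_, by omega⟩
      rw [Fin.append_mk_of_le _ _ _ (by omega), Fin.append_mk_of_le _ _ _ (by omega)]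
      convert hdes using 3 <;> omega

theorem descents_append_subset_iff {t u : ℕ} (a : Fin t → α) (c : Fin u → α) (T : Finset ℕ) :
    descents (Fin.append a c) ⊆ insert t (T.map (addRightEmbedding t)) ↔
      Monotone a ∧ descents c ⊆ T := by
  rw [subset_insert_iff, erase_descents_append, union_subset_iff, map_subset_map,
    descents_subset_map_addRight_iff, descents_eq_empty_iff]

theorem descents_append_eq_or_iff {t u : ℕ} (a : Fin t → α) (c : Fin u → α) {T : Finset ℕ}
    (hT : 0 ∉ T) :
    (descents (Fin.append a c) = insert t (T.map (addRightEmbedding t)) ∨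
        descents (Fin.append a c) = T.map (addRightEmbedding t)) ↔
      Monotone a ∧ descents c = T := by
  rw [← Finset.erase_eq_iff_of_notMem (by simpa using hT), erase_descents_append,
    ← descents_eq_empty_iff]
  constructor
  · intro h
    have ha : descents a = ∅ := (descents_subset_map_addRight_iff a T).1 (h ▸ subset_union_left)
    rw [ha, empty_union, map_inj] at h
    exact ⟨ha, h⟩
  · rintro ⟨ha, rfl⟩
    rw [ha, empty_union]

end Descents

section Weights

variable {α R : Type*} [Fintype α] [CommSemiring R] (p : α → R)

theorem sum_filter_append_eq_mul {t u : ℕ} {P : (Fin (t + u) → α) → Prop}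
    {A : (Fin t → α) → Prop} {B : (Fin u → α) → Prop}
    [DecidablePred P] [DecidablePred A] [DecidablePred B]
    (h : ∀ a c, P (Fin.append a c) ↔ A a ∧ B c) :
    ∑ y with P y, ∏ i, p (y i) = (∑ a with A a, ∏ i, p (a i)) * ∑ c with B c, ∏ i, p (c i) := by
  rw [sum_filter, ← (Fin.appendEquiv t u).sum_comp, Fintype.sum_prod_type, sum_filter,
    sum_filter, sum_mul_sum]
  refine sum_congr rfl fun a _ => sum_congr rfl fun c _ => ?_
  have hP : P (Fin.appendEquiv t u (a, c)) ↔ A a ∧ B c := h a c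
  simp only [hP, Fin.appendEquiv_apply, Fin.prod_univ_add, Fin.append_left, Fin.append_right]
  split_ifs <;> simp_all

theorem sum_prod_eq_one (hp : ∑ x, p x = 1) (n : ℕ) : ∑ y : Fin n → α, ∏ i, p (y i) = 1 := by
  rw [← Fintype.prod_sum]
  simp [hp]

theorem sum_strictMono_prod_eq_sum_powersetCard [LinearOrder α] (m : ℕ) :
    ∑ a : Fin m → α with StrictMono a, ∏ i, p (a i) = ∑ T ∈ powersetCard m univ, ∏ x ∈ T, p x := by
  have hcard {a : Fin m → α} (ha : StrictMono a) : (univ.image a).card = m := by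
    rw [card_image_of_injective _ ha.injective, card_fin]
  refine sum_bij (fun a _ => univ.image a) (fun a ha => ?_) (fun a ha a' ha' h => ?_)
    (fun T hT => ?_) (fun a ha => ?_)
  · exact mem_powersetCard.2 ⟨subset_univ _, hcard (mem_filter.1 ha).2⟩
  · have ha := (mem_filter.1 ha).2
    have ha' := (mem_filter.1 ha').2
    exact (orderEmbOfFin_unique (hcard ha) (fun i => mem_image_of_mem a (mem_univ i)) ha).trans
      (orderEmbOfFin_unique (hcard ha) (fun i => h ▸ mem_image_of_mem a' (mem_univ i)) ha').symm
  · have hT := (mem_powersetCard.1 hT).2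
    exact ⟨T.orderEmbOfFin hT, mem_filter.2 ⟨mem_univ _, (T.orderEmbOfFin hT).strictMono⟩,
      image_orderEmbOfFin_univ T hT⟩
  · exact (prod_image fun i _ j _ hij => (mem_filter.1 ha).2.injective hij).symm

theorem sum_strictAnti_prod_eq_sum_powersetCard [LinearOrder α] (m : ℕ) :
    ∑ a : Fin m → α with StrictAnti a, ∏ i, p (a i) = ∑ T ∈ powersetCard m univ, ∏ x ∈ T, p x :=
  sum_strictMono_prod_eq_sum_powersetCard (α := αᵒᵈ) (p ∘ OrderDual.ofDual) m

end Weights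

section GapMatrix

variable {R : Type*} [CommRing R]

def gapMatrix (h : ℕ → R) (s : ℕ → ℕ) (k : ℕ) : Matrix (Fin (k + 1)) (Fin (k + 1)) R :=
  Matrix.of fun i j => if s i ≤ s (j + 1) then h (s (j + 1) - s i) else 0

theorem det_gapMatrix_succ (h : ℕ → R) (h0 : h 0 = 1) (s : ℕ → ℕ) (k : ℕ)
    (hs : StrictMonoOn s (Set.Iic (k + 2))) :
    (gapMatrix h s (k + 1)).det = h (s 1 - s 0) * (gapMatrix h (fun i => s (i + 1)) k).det
      - (gapMatrix h (fun i => s (if i = 0 then 0 else i + 1)) k).det := by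
  have hs01 : s 0 < s 1 := hs (by simp) (by simp) (by simp)
  have hs1 (m : Fin k) : s 1 < s (m + 2) :=
    hs (by simp) (by simp only [Set.mem_Iic]; omega) (by omega)
  rw [Matrix.det_succ_column_zero, Fin.sum_univ_succ, Fin.sum_univ_succ,
    sum_eq_zero fun m _ => by simp [gapMatrix, (hs1 m).not_ge]]
  have minor_zero : (gapMatrix h s (k + 1)).submatrix (Fin.succAbove 0) Fin.succ
      = gapMatrix h (fun i => s (i + 1)) k := by
    ext i j
    simp [gapMatrix]
  have minor_one : (gapMatrix h s (k + 1)).submatrix (Fin.succAbove 1) Fin.succ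
      = gapMatrix h (fun i => s (if i = 0 then 0 else i + 1)) k := by
    ext i j
    simp [gapMatrix, Fin.val_succAbove_one]
  rw [Fin.succ_zero_eq_one, minor_zero, minor_one]
  simp [gapMatrix, hs01.le, h0, sub_eq_add_neg]

end GapMatrix

/-- `{s₁ - s₀, …, s_k - s₀}`; allowing `s₀ ≠ 0` lets the induction pass to the tail
`fun i => s (i + 1)` without renormalising. -/
def markedSet (s : ℕ → ℕ) (k : ℕ) : Finset ℕ :=
  (range k).image fun i => s (i + 1) - s 0

theorem markedSet_succ (s : ℕ → ℕ) (k : ℕ) :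
    markedSet s (k + 1) =
      insert (s 1 - s 0) (markedSet (fun i => s (if i = 0 then 0 else i + 1)) k) := by
  simp only [markedSet, range_add_one', image_insert, map_eq_image, image_image]
  rfl

theorem markedSet_skip_one {s : ℕ → ℕ} {k : ℕ} (hs : StrictMonoOn s (Set.Iic (k + 1))) :
    markedSet (fun i => s (if i = 0 then 0 else i + 1)) k =
      (markedSet (fun i => s (i + 1)) k).map (addRightEmbedding (s 1 - s 0)) := by
  rw [map_eq_image, markedSet, markedSet, image_image]
  refine image_congr fun i hi => ?_
  have hi : i < k := mem_range.1 hi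
  have h01 : s 0 ≤ s 1 := hs.monotoneOn (by simp) (by simp) (by simp)
  have h1 : s 1 ≤ s (i + 1 + 1) := hs.monotoneOn (by simp) (by simp only [Set.mem_Iic]; omega)
    (by omega)
  simp only [Function.comp_apply, addRightEmbedding_apply, if_true, add_eq_zero, one_ne_zero,
    and_false, if_false, zero_add]
  omega

theorem zero_notMem_markedSet {s : ℕ → ℕ} {k : ℕ} (hs : StrictMonoOn s (Set.Iic k)) :
    0 ∉ markedSet s k := by
  simp only [markedSet, mem_image, mem_range, not_exists, not_and]
  intro i hi
  have := hs (by simp) (by simp only [Set.mem_Iic]; omega) (by omega : 0 < i + 1)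
  omega

theorem markedSet_subset_Ioo {s : ℕ → ℕ} {k : ℕ} (hs : StrictMonoOn s (Set.Iic (k + 1))) :
    markedSet s k ⊆ Ioo 0 (s (k + 1) - s 0) := by
  intro j hj
  obtain ⟨i, hi, rfl⟩ := mem_image.1 hj
  have hi : i < k := mem_range.1 hi
  have h1 := hs (by simp) (by simp only [Set.mem_Iic]; omega) (by omega : 0 < i + 1)
  have h2 := hs (by simp only [Set.mem_Iic]; omega) (by simp) (by omega : i + 1 < k + 1)
  simp only [mem_Ioo]
  omega

theorem StrictMonoOn.Iic_comp_add_one {s : ℕ → ℕ} {k : ℕ}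
    (hs : StrictMonoOn s (Set.Iic (k + 1))) :
    StrictMonoOn (fun i => s (i + 1)) (Set.Iic k) :=
  fun i hi j hj hij => hs (by simpa using hi) (by simpa using hj) (by omega)

theorem StrictMonoOn.Iic_comp_skip_one {s : ℕ → ℕ} {k : ℕ}
    (hs : StrictMonoOn s (Set.Iic (k + 1))) :
    StrictMonoOn (fun i => s (if i = 0 then 0 else i + 1)) (Set.Iic k) := by
  have hskip : StrictMono fun i : ℕ => if i = 0 then 0 else i + 1 := fun i j hij => by
    dsimp only
    split_ifs <;> omega
  exact hs.comp (hskip.strictMonoOn _) fun i hi => by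
    simp only [Set.mem_Iic] at hi ⊢
    split_ifs <;> omega

section Trials

variable {b : ℕ} (p : Fin b → ℝ)

theorem hpoly_eq_sum_monotone (m : ℕ) :
    hpoly b p m = ∑ a : Fin m → Fin b with Monotone a, ∏ i, p (a i) :=
  rfl

theorem sum_descents_subset_insert_map (t u : ℕ) (T : Finset ℕ) :
    ∑ y : Fin (t + u) → Fin b with descents y ⊆ insert t (T.map (addRightEmbedding t)),
        ∏ i, p (y i)
      = hpoly b p t * ∑ c : Fin u → Fin b with descents c ⊆ T, ∏ i, p (c i) :=
  sum_filter_append_eq_mul p (descents_append_subset_iff · · T)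

theorem sum_descents_eq_insert_map_add (t u : ℕ) {T : Finset ℕ} (hT : 0 ∉ T) :
    ∑ y : Fin (t + u) → Fin b with descents y = insert t (T.map (addRightEmbedding t)),
        ∏ i, p (y i)
      + ∑ y : Fin (t + u) → Fin b with descents y = T.map (addRightEmbedding t), ∏ i, p (y i)
      = hpoly b p t * ∑ c : Fin u → Fin b with descents c = T, ∏ i, p (c i) := by
  have htT : t ∉ T.map (addRightEmbedding t) := by simpa using hT
  have hdisj : Disjoint
      (univ.filter fun y : Fin (t + u) → Fin b =>
        descents y = insert t (T.map (addRightEmbedding t)))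
      (univ.filter fun y => descents y = T.map (addRightEmbedding t)) :=
    disjoint_filter.2 fun y _ h h' => htT (by rw [← h', h]; exact mem_insert_self t _)
  rw [← sum_union hdisj, ← filter_or]
  exact sum_filter_append_eq_mul p (descents_append_eq_or_iff · · hT)

theorem sum_descents_subset_markedSet (k : ℕ) (s : ℕ → ℕ) (n : ℕ)
    (hs : StrictMonoOn s (Set.Iic (k + 1))) (hn : s 0 + n = s (k + 1)) :
    ∑ y : Fin n → Fin b with descents y ⊆ markedSet s k, ∏ i, p (y i)
      = ∏ i ∈ range (k + 1), hpoly b p (s (i + 1) - s i) := by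
  induction k generalizing s n with
  | zero =>
    obtain rfl : n = s 1 - s 0 := by rw [zero_add] at hn; omega
    simp [markedSet, descents_eq_empty_iff, hpoly_eq_sum_monotone]
  | succ k ih =>
    have h01 : s 0 ≤ s 1 := hs.monotoneOn (by simp) (by simp) (by simp)
    have h1 : s 1 ≤ s (k + 1 + 1) := hs.monotoneOn (by simp) (by simp) (by omega)
    obtain rfl : n = (s 1 - s 0) + (s (k + 1 + 1) - s 1) := by omega
    have hs' : StrictMonoOn s (Set.Iic (k + 1)) := hs.mono (Set.Iic_subset_Iic.2 (by omega))
    rw [markedSet_succ, markedSet_skip_one hs', sum_descents_subset_insert_map,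
      ih _ _ hs.Iic_comp_add_one (by simp only [zero_add]; omega), prod_range_succ' _ (k + 1),
      mul_comm]

theorem sum_descents_eq_markedSet (k : ℕ) (s : ℕ → ℕ) (n : ℕ)
    (hs : StrictMonoOn s (Set.Iic (k + 1))) (hn : s 0 + n = s (k + 1)) :
    ∑ y : Fin n → Fin b with descents y = markedSet s k, ∏ i, p (y i)
      = (gapMatrix (hpoly b p) s k).det := by
  induction k generalizing s n with
  | zero =>
    obtain rfl : n = s 1 - s 0 := by rw [zero_add] at hn; omega
    have h01 : s 0 ≤ s 1 := hs.monotoneOn (by simp) (by simp) (by simp)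
    simp [markedSet, descents_eq_empty_iff, hpoly_eq_sum_monotone, gapMatrix, h01]
  | succ k ih =>
    have h01 : s 0 ≤ s 1 := hs.monotoneOn (by simp) (by simp) (by simp)
    have h1 : s 1 ≤ s (k + 1 + 1) := hs.monotoneOn (by simp) (by simp) (by omega)
    obtain rfl : n = (s 1 - s 0) + (s (k + 1 + 1) - s 1) := by omega
    have hs' : StrictMonoOn s (Set.Iic (k + 1)) := hs.mono (Set.Iic_subset_Iic.2 (by omega))
    have hsucc : StrictMonoOn (fun i => s (i + 1)) (Set.Iic k) :=
      hs.Iic_comp_add_one.mono (Set.Iic_subset_Iic.2 k.le_succ)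
    have hrec := sum_descents_eq_insert_map_add p (s 1 - s 0) (s (k + 1 + 1) - s 1)
      (zero_notMem_markedSet hsucc)
    rw [← markedSet_skip_one hs', ← markedSet_succ,
      ih _ _ hs.Iic_comp_add_one (by simp only [zero_add]; omega),
      ih _ _ hs.Iic_comp_skip_one (by show s 0 + _ = s (k + 1 + 1); omega)] at hrec
    rw [det_gapMatrix_succ _ (by simp [hpoly]) s k hs, ← hrec]
    ring

theorem sum_strictAnti_prefix_eq_epoly (hp1 : ∑ x, p x = 1) (i u : ℕ) :
    ∑ y : Fin (i + 1 + u) → Fin b with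
        ∀ m : Fin i, y ⟨m + 1, by omega⟩ < y ⟨m, by omega⟩, ∏ j, p (y j)
      = epoly b p (i + 1) := by
  rw [sum_filter_append_eq_mul p (A := StrictAnti) (B := fun _ => True) fun a c => ?_,
    filter_true, sum_prod_eq_one p hp1, mul_one]
  · exact sum_strictAnti_prod_eq_sum_powersetCard p (i + 1)
  · rw [Fin.strictAnti_iff_succ_lt, and_true]
    refine forall_congr' fun m => ?_
    rw [Fin.append_mk_of_lt _ _ _ (by omega), Fin.append_mk_of_lt _ _ _ (by omega)]
    rfl

end Trials

theorem markedSet_eq_image_Icc {s : ℕ → ℕ} (hs0 : s 0 = 0) (k : ℕ) :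
    markedSet s k = (Icc 1 k).image s := by
  ext j
  simp only [markedSet, hs0, Nat.sub_zero, mem_image, mem_range, mem_Icc]
  constructor
  · rintro ⟨i, hi, rfl⟩
    exact ⟨i + 1, ⟨by omega, hi⟩, rfl⟩
  · rintro ⟨i, hi, rfl⟩
    exact ⟨i - 1, by omega, by rw [Nat.sub_add_cancel hi.1]⟩

/-- For i.i.d. `Y_1, …, Y_n` with `P(Y = j) = p_j`:  the probability that the descent set is
contained in `S = {s 1 < … < s k}` equals `h_{s_1} h_{s_2 - s_1} ⋯ h_{n - s_k}`; the
probability that it equals `S` is `det(h_{s_{j+1} - s_i})_{i,j=0}^k` (with `h_m = 0` for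
`m < 0`, the `if`-clause); and `P(Y_1 > ⋯ > Y_{i+1}) = e_{i+1}(p_0, …, p_{b-1})`. -/
theorem descents_independent_trials (b n k : ℕ) (p : Fin b → ℝ)
    (hp1 : ∑ i, p i = 1)
    (S : Finset ℕ) (s : ℕ → ℕ)
    (hs0 : s 0 = 0) (hsn : s (k + 1) = n)
    (hmono : ∀ i ≤ k, s i < s (i + 1))
    (hS : S = (Finset.Icc 1 k).image s) :
    (∑ y ∈ Finset.univ.filter (fun y : Fin n → Fin b =>
        ∀ i : Fin (n - 1), y ⟨i.val + 1, by have := i.isLt; omega⟩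
            < y ⟨i.val, by have := i.isLt; omega⟩ → i.val + 1 ∈ S), ∏ i, p (y i))
      = ∏ i ∈ Finset.range (k + 1), hpoly b p (s (i + 1) - s i) ∧
    (∑ y ∈ Finset.univ.filter (fun y : Fin n → Fin b =>
        ∀ i : Fin (n - 1), (y ⟨i.val + 1, by have := i.isLt; omega⟩
            < y ⟨i.val, by have := i.isLt; omega⟩ ↔ i.val + 1 ∈ S)), ∏ i, p (y i))
      = Matrix.det (Matrix.of fun i j : Fin (k + 1) =>
          if s i.val ≤ s (j.val + 1) then hpoly b p (s (j.val + 1) - s i.val) else 0) ∧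
    (∀ i : ℕ, ∀ hi : i + 1 ≤ n,
      (∑ y ∈ Finset.univ.filter (fun y : Fin n → Fin b =>
          ∀ m : Fin i, y ⟨m.val + 1, by have := m.isLt; omega⟩
              < y ⟨m.val, by have := m.isLt; omega⟩), ∏ j, p (y j))
        = epoly b p (i + 1)) := by
  have hs : StrictMonoOn s (Set.Iic (k + 1)) :=
    strictMonoOn_Iic_of_lt_succ fun m hm => hmono m (Order.lt_add_one_iff.1 hm)
  have hn : s 0 + n = s (k + 1) := by omega
  rw [hS, ← markedSet_eq_image_Icc hs0]
  refine ⟨?_, ?_, fun i hi => ?_⟩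
  · refine (sum_congr (filter_congr fun y _ => ?_) fun _ _ => rfl).trans
      (sum_descents_subset_markedSet p k s n hs hn)
    exact descents_subset_iff.symm
  · have hS_Ioo : markedSet s k ⊆ Ioo 0 n := by simpa [hs0, hsn] using markedSet_subset_Ioo hs
    refine (sum_congr (filter_congr fun y _ => ?_) fun _ _ => rfl).trans
      (sum_descents_eq_markedSet p k s n hs hn)
    exact (descents_eq_iff hS_Ioo).symm
  · obtain ⟨u, rfl⟩ : ∃ u, n = i + 1 + u := ⟨n - (i + 1), by omega⟩
    exact sum_strictAnti_prefix_eq_epoly p hp1 i u
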